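/- Let 0 < a < c, and set μ = 2/(a+c), p = (c² - a²)/2, q = (c² + a²)/2, k = √(c² - a²)/c. Define r(t) = √(p·sin(μt) + q) and z(t) = a·G(μt/2 - π/4, k) + c·E(μt/2 - π/4, k) for t ∈ ℝ. Then r and z are smooth, r(t) > 0 and z'(t) > 0 for all t, and the surface of revolution generated by this curve has constant mean curvature: for every t ∈ ℝ, (r''(t)·z'(t) - r'(t)·z''(t)) / (r'(t)² + z'(t)²)^{3/2} - z'(t) / ( r(t)·√(r'(t)² + z'(t)²) ) = -2/(a + c). -/

import Mathlib

open Real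

/-- Incomplete elliptic integral of the first kind. -/
noncomputable def ellG (φ k : ℝ) : ℝ :=
  ∫ u in (0:ℝ)..φ, 1 / Real.sqrt (1 - k^2 * Real.sin u ^ 2)

/-- Incomplete elliptic integral of the second kind. -/
noncomputable def ellEinc (φ k : ℝ) : ℝ :=
  ∫ u in (0:ℝ)..φ, Real.sqrt (1 - k^2 * Real.sin u ^ 2)

/-- The radial coordinate of the standard parametrization of the unduloid with
parameters `a < c`. -/
noncomputable def unduloidR (a c : ℝ) (t : ℝ) : ℝ :=
  Real.sqrt ((c^2 - a^2)/2 * Real.sin (2/(a+c) * t) + (c^2 + a^2)/2)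

/-- The axial coordinate of the standard parametrization of the unduloid with
parameters `a < c`. -/
noncomputable def unduloidZ (a c : ℝ) (t : ℝ) : ℝ :=
  a * ellG (2/(a+c) * t / 2 - π/4) (Real.sqrt (c^2 - a^2) / c) +
  c * ellEinc (2/(a+c) * t / 2 - π/4) (Real.sqrt (c^2 - a^2) / c)

set_option maxHeartbeats 1600000

open Filter in
theorem analyticAt_of_hasDerivAt {F g : ℝ → ℝ} (hF : ∀ x, HasDerivAt F (g x) x)
    {x₀ : ℝ} (hg : AnalyticAt ℝ g x₀) : AnalyticAt ℝ F x₀ := by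
  obtain ⟨p, hp⟩ := hg
  rw [hasFPowerSeriesAt_iff] at hp
  rw [Metric.eventually_nhds_iff] at hp
  obtain ⟨r, hr, hsum⟩ := hp
  set z₀ : ℝ := r/2 with hz₀
  have hz₀pos : 0 < z₀ := by positivity
  have hsum₀ : Summable (fun n => |z₀ ^ n * p.coeff n|) := by
    have := (hsum (show dist z₀ 0 < r by
      rw [dist_zero_right, Real.norm_eq_abs, abs_of_pos hz₀pos]; linarith)).summable
    simpa [smul_eq_mul] using this.abs
  set C : ℝ := ∑' n, |z₀ ^ n * p.coeff n| with hC
  have hCb : ∀ n, |p.coeff n| * z₀ ^ n ≤ C := by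
    intro n
    have := Summable.le_tsum hsum₀ n (fun j _ => abs_nonneg _)
    calc |p.coeff n| * z₀ ^ n = |z₀ ^ n * p.coeff n| := by
          rw [abs_mul, abs_of_pos (pow_pos hz₀pos n)]; ring
    _ ≤ C := this
  set d : ℕ → ℝ := fun n => Nat.rec (F x₀) (fun m _ => p.coeff m / (m+1)) n with hd
  have hd0 : d 0 = F x₀ := rfl
  have hdS : ∀ m : ℕ, d (m+1) = p.coeff m / (m+1) := fun m => rfl
  set ρ : ℝ := z₀/2 with hρ
  have hρpos : 0 < ρ := by positivity
  have hρr : ρ < r := by rw [hρ, hz₀]; linarith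
  set h : ℝ → ℝ := fun y => ∑' n, d n * (y - x₀)^n with hh
  have hcoefb : ∀ m : ℕ, |p.coeff m| * ρ^m ≤ C * (1/2)^m := by
    intro m
    have h2 : ρ^m = z₀^m * (1/2)^m := by
      rw [← mul_pow]; congr 1; rw [hρ]; ring
    rw [h2, ← mul_assoc]
    exact mul_le_mul_of_nonneg_right (hCb m) (by positivity)
  have hdb : ∀ m : ℕ, ((m:ℝ)+1) * |d (m+1)| = |p.coeff m| := by
    intro m
    rw [hdS, abs_div, abs_of_pos (show (0:ℝ) < (m:ℝ)+1 by positivity)]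
    field_simp
  have hu_sum : Summable (fun n : ℕ => (n:ℝ) * |d n| * ρ^(n-1)) := by
    rw [← summable_nat_add_iff 1]
    refine Summable.of_nonneg_of_le (fun m => by positivity) (fun m => ?_)
      ((summable_geometric_of_lt_one (r := (1/2:ℝ)) (by norm_num) (by norm_num)).mul_left C)
    simp only [Nat.add_sub_cancel]
    push_cast
    rw [hdb m]
    exact hcoefb m
  have hbound : ∀ (n : ℕ) (y : ℝ), y ∈ Metric.ball x₀ ρ →
      ‖d n * ((n:ℝ) * (y - x₀)^(n-1))‖ ≤ (n:ℝ) * |d n| * ρ^(n-1) := by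
    intro n y hy
    rw [Metric.mem_ball, dist_eq] at hy
    rw [Real.norm_eq_abs, abs_mul, abs_mul, abs_pow, Nat.abs_cast,
      show (n:ℝ) * |d n| * ρ^(n-1) = |d n| * ((n:ℝ) * ρ^(n-1)) by ring]
    gcongr
  have hderiv : ∀ y ∈ Metric.ball x₀ ρ,
      HasDerivAt h (∑' n, d n * ((n:ℝ) * (y - x₀)^(n-1))) y := by
    intro y hy
    apply hasDerivAt_tsum_of_isPreconnected hu_sum Metric.isOpen_ball
      (convex_ball x₀ ρ).isPreconnected
      (g := fun n y => d n * (y - x₀)^n)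
      (g' := fun n y => d n * ((n:ℝ) * (y - x₀)^(n-1)))
      (fun n y _ => by simpa using (((hasDerivAt_id y).sub_const x₀).pow n).const_mul (d n))
      (fun n y hy => hbound n y hy) (Metric.mem_ball_self hρpos) ?_ hy
    · apply summable_of_ne_finset_zero (s := {0})
      intro n hn
      simp only [Finset.mem_singleton] at hn
      show d n * (x₀ - x₀)^n = 0
      rw [sub_self, zero_pow hn, mul_zero]
  have hg_eq : ∀ y ∈ Metric.ball x₀ ρ, (∑' n, d n * ((n:ℝ) * (y - x₀)^(n-1))) = g y := by
    intro y hy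
    rw [Metric.mem_ball, dist_eq] at hy
    have hsum' : HasSum (fun n => (y - x₀)^n • p.coeff n) (g y) := by
      have := hsum (show dist (y - x₀) 0 < r by
        rw [dist_zero_right, Real.norm_eq_abs]; linarith)
      simpa using this
    have hsumm : Summable (fun n => d n * ((n:ℝ) * (y - x₀)^(n-1))) :=
      Summable.of_norm_bounded hu_sum
        (fun n => hbound n y (by rw [Metric.mem_ball, dist_eq]; exact hy))
    rw [Summable.tsum_eq_zero_add hsumm]
    have h0 : d 0 * ((0:ℕ):ℝ) * (y - x₀)^(0-1) = 0 := by norm_num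
    have : ∀ m : ℕ, d (m+1) * (((m+1:ℕ):ℝ) * (y - x₀)^(m+1-1)) = (y - x₀)^m • p.coeff m := by
      intro m
      rw [hdS, Nat.add_sub_cancel, smul_eq_mul]
      push_cast
      field_simp
    rw [show (∑' m : ℕ, d (m+1) * (((m+1:ℕ):ℝ) * (y - x₀)^(m+1-1)))
        = ∑' m : ℕ, (y - x₀)^m • p.coeff m from tsum_congr this]
    rw [hsum'.tsum_eq]
    norm_num
  have hhx₀ : h x₀ = F x₀ := by
    rw [hh]
    simp only [sub_self]
    rw [tsum_eq_single 0 (fun n hn => by rw [zero_pow hn, mul_zero])]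
    rw [pow_zero, mul_one, hd0]
  have hFh : ∀ y ∈ Metric.ball x₀ ρ, F y = h y := by
    intro y hy
    have key : ∀ z ∈ Metric.ball x₀ ρ, HasDerivWithinAt (fun w => F w - h w) 0 (Metric.ball x₀ ρ) z := by
      intro z hz
      have := (hF z).sub (hderiv z hz)
      rw [hg_eq z hz, sub_self] at this
      exact this.hasDerivWithinAt
    have := (convex_ball x₀ ρ).norm_image_sub_le_of_norm_hasDerivWithin_le (C := 0)
      key (fun z _ => by simp) (Metric.mem_ball_self hρpos) hy
    rw [zero_mul, norm_le_zero_iff, sub_eq_zero] at this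
    have h2 : F y - h y = F x₀ - h x₀ := this
    rw [hhx₀] at h2
    linarith [h2]
  refine ⟨FormalMultilinearSeries.ofScalars ℝ d, hasFPowerSeriesAt_iff.mpr ?_⟩
  have hcoeff : ∀ n, (FormalMultilinearSeries.ofScalars ℝ d).coeff n = d n := by
    intro n
    have := FormalMultilinearSeries.ofScalars_apply_eq (E := ℝ) (c := d) (1:ℝ) n
    rw [FormalMultilinearSeries.coeff]
    simp only [one_pow, smul_eq_mul, mul_one] at this
    convert this using 2
    rfl
  apply Filter.eventually_of_mem (Metric.ball_mem_nhds 0 hρpos)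
  intro z hz
  rw [Metric.mem_ball, dist_zero_right, Real.norm_eq_abs] at hz
  have hzball : x₀ + z ∈ Metric.ball x₀ ρ := by
    rw [Metric.mem_ball, dist_eq]
    simpa using hz
  have hsummz : Summable (fun n => d n * z^n) := by
    rw [← summable_nat_add_iff 1]
    refine Summable.of_norm_bounded
      (((summable_geometric_of_lt_one (r := (1/2:ℝ)) (by norm_num) (by norm_num)).mul_left C).mul_right ρ)
      (fun m => ?_)
    have hdle : |d (m+1)| ≤ |p.coeff m| := by
      nlinarith [hdb m, abs_nonneg (d (m+1)),
        mul_nonneg (Nat.cast_nonneg (α := ℝ) m) (abs_nonneg (d (m+1)))]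
    rw [Real.norm_eq_abs, abs_mul, abs_pow]
    calc |d (m+1)| * |z|^(m+1) ≤ |d (m+1)| * ρ^(m+1) :=
          mul_le_mul_of_nonneg_left (pow_le_pow_left₀ (abs_nonneg z) hz.le _) (abs_nonneg _)
    _ ≤ |p.coeff m| * ρ^(m+1) := mul_le_mul_of_nonneg_right hdle (by positivity)
    _ = (|p.coeff m| * ρ^m) * ρ := by rw [pow_succ, mul_assoc]
    _ ≤ C * (1/2)^m * ρ := mul_le_mul_of_nonneg_right (hcoefb m) hρpos.le
  have hFval : F (x₀ + z) = ∑' n, d n * z^n := by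
    rw [hFh (x₀ + z) hzball, hh]
    simp only [add_sub_cancel_left]
  have := hsummz.hasSum
  rw [← hFval] at this
  have e : (fun n => z ^ n • (FormalMultilinearSeries.ofScalars ℝ d).coeff n) = fun n => d n * z^n := by
    funext n; rw [hcoeff, smul_eq_mul]; ring
  rw [e]; exact this


theorem stmt_11 (a c : ℝ) (ha : 0 < a) (hac : a < c) :
    ContDiff ℝ (⊤ : ℕ∞) (unduloidR a c) ∧ ContDiff ℝ (⊤ : ℕ∞) (unduloidZ a c) ∧
    (∀ t : ℝ, 0 < unduloidR a c t) ∧ (∀ t : ℝ, 0 < deriv (unduloidZ a c) t) ∧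
    ∀ t : ℝ,
      (deriv (deriv (unduloidR a c)) t * deriv (unduloidZ a c) t
          - deriv (unduloidR a c) t * deriv (deriv (unduloidZ a c)) t) /
        ((deriv (unduloidR a c) t ^ 2 + deriv (unduloidZ a c) t ^ 2) ^ ((3:ℝ)/2))
      - deriv (unduloidZ a c) t /
        (unduloidR a c t *
          Real.sqrt (deriv (unduloidR a c) t ^ 2 + deriv (unduloidZ a c) t ^ 2))
      = -2 / (a + c) := by

  have hc : 0 < c := ha.trans hac
  have hacpos : 0 < a + c := by linarith
  -- positivity of the inner polynomial f
  have hfpos : ∀ t : ℝ, 0 < (c^2-a^2)/2 * sin (2/(a+c)*t) + (c^2+a^2)/2 := by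
    intro t
    nlinarith [mul_nonneg (show (0:ℝ) ≤ (c^2-a^2)/2 by nlinarith)
      (show (0:ℝ) ≤ 1 + sin (2/(a+c)*t) by nlinarith [Real.neg_one_le_sin (2/(a+c)*t)]),
      pow_pos ha 2]
  have hSpos : ∀ t : ℝ, 0 < Real.sqrt ((c^2-a^2)/2 * sin (2/(a+c)*t) + (c^2+a^2)/2) :=
    fun t => Real.sqrt_pos.mpr (hfpos t)
  have hS2 : ∀ t : ℝ, Real.sqrt ((c^2-a^2)/2 * sin (2/(a+c)*t) + (c^2+a^2)/2) ^ 2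
      = (c^2-a^2)/2 * sin (2/(a+c)*t) + (c^2+a^2)/2 := fun t => Real.sq_sqrt (hfpos t).le
  -- derivative of f
  have hfd : ∀ t : ℝ, HasDerivAt (fun t => (c^2-a^2)/2 * sin (2/(a+c)*t) + (c^2+a^2)/2)
      ((c^2-a^2)/2 * cos (2/(a+c)*t) * (2/(a+c))) t := by
    intro t
    have h1 : HasDerivAt (fun t : ℝ => 2/(a+c)*t) (2/(a+c)) t := by
      simpa using (hasDerivAt_id t).const_mul (2/(a+c))
    have h2 := ((Real.hasDerivAt_sin (2/(a+c)*t)).comp t h1).const_mul ((c^2-a^2)/2)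
    simpa [mul_assoc] using h2.add_const ((c^2+a^2)/2)
  -- first derivative of R
  have hR : ∀ t : ℝ, HasDerivAt (unduloidR a c)
      ((c^2-a^2)/2 * cos (2/(a+c)*t) /
        ((a+c) * Real.sqrt ((c^2-a^2)/2 * sin (2/(a+c)*t) + (c^2+a^2)/2))) t := by
    intro t
    have := (hfd t).sqrt (hfpos t).ne'
    have hval : (c^2-a^2)/2 * cos (2/(a+c)*t) * (2/(a+c)) /
        (2 * Real.sqrt ((c^2-a^2)/2 * sin (2/(a+c)*t) + (c^2+a^2)/2))
        = (c^2-a^2)/2 * cos (2/(a+c)*t) /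
        ((a+c) * Real.sqrt ((c^2-a^2)/2 * sin (2/(a+c)*t) + (c^2+a^2)/2)) := by
      rw [div_eq_div_iff (mul_pos two_pos (hSpos t)).ne' (mul_pos hacpos (hSpos t)).ne']
      field_simp
    rw [hval] at this
    exact this
  -- first derivative of Z
  have hZ : ∀ t : ℝ, HasDerivAt (unduloidZ a c)
      ((a*c + ((c^2-a^2)/2 * sin (2/(a+c)*t) + (c^2+a^2)/2)) /
        ((a+c) * Real.sqrt ((c^2-a^2)/2 * sin (2/(a+c)*t) + (c^2+a^2)/2))) t := by
    intro t
    have hk2 : (Real.sqrt (c^2-a^2)/c)^2 = (c^2-a^2)/c^2 := by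
      rw [div_pow, Real.sq_sqrt (by nlinarith)]
    have hpos : ∀ u : ℝ, 0 < 1 - (Real.sqrt (c^2-a^2)/c)^2 * Real.sin u ^ 2 := by
      intro u
      rw [hk2]
      have h1 : 0 < c^2 - (c^2-a^2) * Real.sin u ^ 2 := by
        nlinarith [mul_nonneg (show (0:ℝ) ≤ c^2-a^2 by nlinarith)
          (show (0:ℝ) ≤ 1 - Real.sin u^2 by nlinarith [Real.sin_sq_le_one u]), pow_pos ha 2]
      have h2 : (c^2-a^2)/c^2 * Real.sin u ^2 = ((c^2-a^2) * Real.sin u ^2)/c^2 := by ring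
      rw [h2, sub_pos, div_lt_one (by positivity)]
      nlinarith
    have hcont2 : Continuous (fun u => Real.sqrt (1 - (Real.sqrt (c^2-a^2)/c)^2 * Real.sin u ^ 2)) := by
      fun_prop
    have hcont1 : Continuous (fun u => 1 / Real.sqrt (1 - (Real.sqrt (c^2-a^2)/c)^2 * Real.sin u ^ 2)) := by
      apply continuous_const.div hcont2
      intro u
      exact (Real.sqrt_pos.mpr (hpos u)).ne'
    have hinner : HasDerivAt (fun t : ℝ => 2/(a+c) * t / 2 - π/4) (1/(a+c)) t := by
      have h3 : HasDerivAt (fun t : ℝ => 2/(a+c) * t / 2 - π/4) (2/(a+c) * 1 / 2) t :=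
        (((hasDerivAt_id t).const_mul (2/(a+c))).div_const 2).sub_const (π/4)
      convert h3 using 1; ring
    set φt := 2/(a+c) * t / 2 - π/4 with hφ
    have hG : HasDerivAt (fun φ => ellG φ (Real.sqrt (c^2-a^2)/c))
        (1 / Real.sqrt (1 - (Real.sqrt (c^2-a^2)/c)^2 * Real.sin φt ^ 2)) φt :=
      (hcont1.integral_hasStrictDerivAt 0 φt).hasDerivAt
    have hE : HasDerivAt (fun φ => ellEinc φ (Real.sqrt (c^2-a^2)/c))
        (Real.sqrt (1 - (Real.sqrt (c^2-a^2)/c)^2 * Real.sin φt ^ 2)) φt :=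
      (hcont2.integral_hasStrictDerivAt 0 φt).hasDerivAt
    have htrig : 1 - (Real.sqrt (c^2-a^2)/c)^2 * Real.sin φt ^ 2
        = ((c^2-a^2)/2 * sin (2/(a+c)*t) + (c^2+a^2)/2) / c^2 := by
      rw [hk2, hφ]
      have h2 : Real.sin (2/(a+c) * t / 2 - π/4) ^ 2
          = 1/2 - Real.sin (2/(a+c)*t) / 2 := by
        have h4 := Real.sin_sq (2/(a+c) * t / 2 - π/4)
        rw [h4, Real.cos_sq]
        have h5 : 2 * (2/(a+c) * t / 2 - π/4) = 2/(a+c)*t - π/2 := by ring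
        rw [h5, Real.cos_sub_pi_div_two]
        ring
      rw [h2]
      field_simp
      ring
    have hsq : Real.sqrt (1 - (Real.sqrt (c^2-a^2)/c)^2 * Real.sin φt ^ 2)
        = Real.sqrt ((c^2-a^2)/2 * sin (2/(a+c)*t) + (c^2+a^2)/2) / c := by
      rw [htrig, show ((c^2-a^2)/2 * sin (2/(a+c)*t) + (c^2+a^2)/2) / c^2
          = ((c^2-a^2)/2 * sin (2/(a+c)*t) + (c^2+a^2)/2) * (1/c)^2 by ring,
        Real.sqrt_mul (hfpos t).le, Real.sqrt_sq (by positivity : (0:ℝ) ≤ 1/c)]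
      ring
    have hZ0 := ((hG.comp t hinner).const_mul a).add ((hE.comp t hinner).const_mul c)
    refine HasDerivAt.congr_deriv hZ0 ?_
    rw [hsq]
    set s := sin (2/(a+c)*t) with hsdef
    set S := Real.sqrt ((c^2-a^2)/2 * s + (c^2+a^2)/2) with hSdef
    have hS0 : 0 < S := hSpos t
    have hS2' : S^2 = (c^2-a^2)/2 * s + (c^2+a^2)/2 := hS2 t
    rw [show (c^2-a^2)/2 * s + (c^2+a^2)/2 = S^2 from hS2'.symm]
    field_simp
  -- deriv equalities
  have hDR : deriv (unduloidR a c) = fun t => (c^2-a^2)/2 * cos (2/(a+c)*t) /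
      ((a+c) * Real.sqrt ((c^2-a^2)/2 * sin (2/(a+c)*t) + (c^2+a^2)/2)) :=
    funext fun t => (hR t).deriv
  have hDZ : deriv (unduloidZ a c) = fun t => (a*c + ((c^2-a^2)/2 * sin (2/(a+c)*t) + (c^2+a^2)/2)) /
      ((a+c) * Real.sqrt ((c^2-a^2)/2 * sin (2/(a+c)*t) + (c^2+a^2)/2)) :=
    funext fun t => (hZ t).deriv
  -- smoothness of f
  have hfC : ContDiff ℝ (⊤ : ℕ∞) (fun t : ℝ => (c^2-a^2)/2 * sin (2/(a+c)*t) + (c^2+a^2)/2) := by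
    apply ContDiff.add _ contDiff_const
    exact ContDiff.mul contDiff_const (Real.contDiff_sin.comp (contDiff_const.mul contDiff_id))
  -- smoothness of R
  have hRC : ContDiff ℝ (⊤ : ℕ∞) (unduloidR a c) := by
    refine contDiff_iff_contDiffAt.mpr fun t => ?_
    exact (Real.contDiffAt_sqrt (hfpos t).ne').comp t hfC.contDiffAt
  -- smoothness of the derivative formula of Z
  have hzdC : ContDiff ℝ (⊤ : ℕ∞) (fun t => (a*c + ((c^2-a^2)/2 * sin (2/(a+c)*t) + (c^2+a^2)/2)) /
      ((a+c) * Real.sqrt ((c^2-a^2)/2 * sin (2/(a+c)*t) + (c^2+a^2)/2))) := by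
    refine contDiff_iff_contDiffAt.mpr fun t => ?_
    refine ContDiffAt.div ?_ ?_ ?_
    · exact (contDiff_const.add hfC).contDiffAt
    · exact (contDiff_const.mul hRC).contDiffAt
    · exact (mul_pos hacpos (hSpos t)).ne'
  -- smoothness of Z
  have hZC : ContDiff ℝ (⊤ : ℕ∞) (unduloidZ a c) := by
    refine contDiff_iff_contDiffAt.mpr fun t => ?_
    refine AnalyticAt.contDiffAt ?_
    have hfω : ContDiff ℝ (⊤ : WithTop ℕ∞) (fun t : ℝ => (c^2-a^2)/2 * sin (2/(a+c)*t) + (c^2+a^2)/2) :=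
      ContDiff.add (contDiff_const.mul (Real.contDiff_sin.comp (contDiff_const.mul contDiff_id))) contDiff_const
    have hzdω : ContDiffAt ℝ (⊤ : WithTop ℕ∞) (fun t => (a*c + ((c^2-a^2)/2 * sin (2/(a+c)*t) + (c^2+a^2)/2)) /
        ((a+c) * Real.sqrt ((c^2-a^2)/2 * sin (2/(a+c)*t) + (c^2+a^2)/2))) t := by
      refine ContDiffAt.div ?_ ?_ ?_
      · exact (contDiff_const.add hfω).contDiffAt
      · exact contDiffAt_const.mul ((Real.contDiffAt_sqrt (hfpos t).ne').comp t hfω.contDiffAt)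
      · exact (mul_pos hacpos (hSpos t)).ne'
    exact analyticAt_of_hasDerivAt hZ (hzdω.analyticAt)
  refine ⟨hRC, hZC, fun t => hSpos t, ?_, ?_⟩
  · intro t
    rw [hDZ]
    have h1 : 0 < a*c + ((c^2-a^2)/2 * sin (2/(a+c)*t) + (c^2+a^2)/2) := by
      have := hfpos t; nlinarith [mul_pos ha hc]
    exact div_pos h1 (mul_pos hacpos (hSpos t))
  -- second derivatives
  have hN : ∀ t : ℝ, HasDerivAt (fun t => (c^2-a^2)/2 * cos (2/(a+c)*t))
      ((c^2-a^2)/2 * (-sin (2/(a+c)*t)) * (2/(a+c))) t := by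
    intro t
    have h1 : HasDerivAt (fun t : ℝ => 2/(a+c)*t) (2/(a+c)) t := by
      simpa using (hasDerivAt_id t).const_mul (2/(a+c))
    have h2 := ((Real.hasDerivAt_cos (2/(a+c)*t)).comp t h1).const_mul ((c^2-a^2)/2)
    simpa [mul_assoc] using h2
  have hD : ∀ t : ℝ, HasDerivAt (fun t => (a+c) * Real.sqrt ((c^2-a^2)/2 * sin (2/(a+c)*t) + (c^2+a^2)/2))
      ((a+c) * ((c^2-a^2)/2 * cos (2/(a+c)*t) * (2/(a+c)) /
        (2 * Real.sqrt ((c^2-a^2)/2 * sin (2/(a+c)*t) + (c^2+a^2)/2)))) t :=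
    fun t => ((hfd t).sqrt (hfpos t).ne').const_mul (a+c)
  have hR2 : ∀ t : ℝ, HasDerivAt (fun t => (c^2-a^2)/2 * cos (2/(a+c)*t) /
      ((a+c) * Real.sqrt ((c^2-a^2)/2 * sin (2/(a+c)*t) + (c^2+a^2)/2)))
      (-((c^2-a^2)/2 * (2 * sin (2/(a+c)*t) * ((c^2-a^2)/2 * sin (2/(a+c)*t) + (c^2+a^2)/2)
          + (c^2-a^2)/2 * cos (2/(a+c)*t)^2)) /
        ((a+c)^2 * ((c^2-a^2)/2 * sin (2/(a+c)*t) + (c^2+a^2)/2)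
          * Real.sqrt ((c^2-a^2)/2 * sin (2/(a+c)*t) + (c^2+a^2)/2))) t := by
    intro t
    have hdiv := (hN t).div (hD t) ((mul_pos hacpos (hSpos t)).ne')
    refine HasDerivAt.congr_deriv hdiv ?_
    have h2 := hS2 t
    have h0 := (hSpos t).ne'
    set s := sin (2/(a+c)*t) with hs
    set co := cos (2/(a+c)*t) with hco'
    set S := Real.sqrt ((c^2-a^2)/2 * s + (c^2+a^2)/2) with hS'
    rw [show (c^2-a^2)/2 * s + (c^2+a^2)/2 = S^2 from h2.symm]
    field_simp
    ring
  have hZ2 : ∀ t : ℝ, HasDerivAt (fun t => (a*c + ((c^2-a^2)/2 * sin (2/(a+c)*t) + (c^2+a^2)/2)) /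
      ((a+c) * Real.sqrt ((c^2-a^2)/2 * sin (2/(a+c)*t) + (c^2+a^2)/2)))
      ((c^2-a^2)/2 * cos (2/(a+c)*t) * (((c^2-a^2)/2 * sin (2/(a+c)*t) + (c^2+a^2)/2) - a*c) /
        ((a+c)^2 * ((c^2-a^2)/2 * sin (2/(a+c)*t) + (c^2+a^2)/2)
          * Real.sqrt ((c^2-a^2)/2 * sin (2/(a+c)*t) + (c^2+a^2)/2))) t := by
    intro t
    have hnum := (hfd t).const_add (a*c)
    have hdiv := hnum.div (hD t) ((mul_pos hacpos (hSpos t)).ne')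
    refine HasDerivAt.congr_deriv hdiv ?_
    have h2 := hS2 t
    have h0 := (hSpos t).ne'
    set s := sin (2/(a+c)*t) with hs
    set co := cos (2/(a+c)*t) with hco'
    set S := Real.sqrt ((c^2-a^2)/2 * s + (c^2+a^2)/2) with hS'
    rw [show (c^2-a^2)/2 * s + (c^2+a^2)/2 = S^2 from h2.symm]
    field_simp
    ring
  -- unit speed
  have hnorm : ∀ t : ℝ, ((c^2-a^2)/2 * cos (2/(a+c)*t) /
        ((a+c) * Real.sqrt ((c^2-a^2)/2 * sin (2/(a+c)*t) + (c^2+a^2)/2))) ^ 2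
      + ((a*c + ((c^2-a^2)/2 * sin (2/(a+c)*t) + (c^2+a^2)/2)) /
        ((a+c) * Real.sqrt ((c^2-a^2)/2 * sin (2/(a+c)*t) + (c^2+a^2)/2))) ^ 2 = 1 := by
    intro t
    have h2 := hS2 t
    have h0 := (hSpos t).ne'
    have hpyth := Real.sin_sq_add_cos_sq (2/(a+c)*t)
    set s := sin (2/(a+c)*t) with hs
    set co := cos (2/(a+c)*t) with hco'
    set S := Real.sqrt ((c^2-a^2)/2 * s + (c^2+a^2)/2) with hS'
    rw [show (c^2-a^2)/2 * s + (c^2+a^2)/2 = S^2 from h2.symm]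
    rw [div_pow, div_pow, ← add_div, div_eq_one_iff_eq (by positivity)]
    linear_combination (S^2 + (c^2-a^2)/2*s - (c^2+a^2)/2) * h2 + ((c^2-a^2)/2)^2 * hpyth
  intro t
  simp only [hDR, hDZ]
  rw [(hR2 t).deriv, (hZ2 t).deriv, hnorm t, Real.one_rpow, Real.sqrt_one, div_one, mul_one]
  show _ - _ / Real.sqrt ((c^2-a^2)/2 * Real.sin (2/(a+c) * t) + (c^2+a^2)/2) = _
  have h2 := hS2 t
  have h0 := (hSpos t).ne'
  have hpyth := Real.sin_sq_add_cos_sq (2/(a+c)*t)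
  set s := sin (2/(a+c)*t) with hs
  set co := cos (2/(a+c)*t) with hco'
  set S := Real.sqrt ((c^2-a^2)/2 * s + (c^2+a^2)/2) with hS'
  rw [show (c^2-a^2)/2 * s + (c^2+a^2)/2 = S^2 from h2.symm]
  have hSne : S ≠ 0 := h0
  have hacne : (a+c) ≠ 0 := hacpos.ne'
  have e1 : -((c^2-a^2)/2 * (2 * s * S^2 + (c^2-a^2)/2 * co^2)) / ((a+c)^2 * S^2 * S)
        * ((a*c + S^2) / ((a+c) * S))
      - (c^2-a^2)/2 * co / ((a+c) * S)
        * ((c^2-a^2)/2 * co * (S^2 - a*c) / ((a+c)^2 * S^2 * S))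
      = -((c^2-a^2) * (s * (a*c + S^2) + (c^2-a^2)/2 * co^2)) / ((a+c)^3 * S^2) := by
    field_simp
    ring
  rw [e1]
  have e2 : (a*c + S^2) / ((a+c) * S) / S = (a*c + S^2) / ((a+c) * S^2) := by
    rw [div_div, mul_assoc, ← pow_two]
  rw [e2]
  rw [div_sub_div _ _ (by positivity) (by positivity), div_eq_div_iff (by positivity) hacne]
  linear_combination ((1)*c^4*S^2 + (-1)*c^4*s*S^2 + (1/2)*c^6 + (-1/2)*c^6*co^2 + (-1/2)*c^6*s^2 + (4)*a*c^3*S^2 + (-2)*a*c^3*s*S^2 + (1)*a*c^5 + (-1)*a*c^5*co^2 + (-1)*a*c^5*s^2 + (6)*a^2*c^2*S^2 + (-1/2)*a^2*c^4 + (1/2)*a^2*c^4*co^2 + (1/2)*a^2*c^4*s^2 + (4)*a^3*c*S^2 + (2)*a^3*c*s*S^2 + (-2)*a^3*c^3 + (2)*a^3*c^3*co^2 + (2)*a^3*c^3*s^2 + (1)*a^4*S^2 + (1)*a^4*s*S^2 + (-1/2)*a^4*c^2 + (1/2)*a^4*c^2*co^2 + (1/2)*a^4*c^2*s^2 + (1)*a^5*c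 + (-1)*a^5*c*co^2 + (-1)*a^5*c*s^2 + (1/2)*a^6 + (-1/2)*a^6*co^2 + (-1/2)*a^6*s^2) * h2 + ((-1/4)*c^8 + (-1/4)*c^8*s + (-1/2)*a*c^7 + (-1/2)*a*c^7*s + (1/2)*a^2*c^6*s + (1/2)*a^3*c^5 + (3/2)*a^3*c^5*s + (1/2)*a^4*c^4 + (1/2)*a^5*c^3 + (-3/2)*a^5*c^3*s + (-1/2)*a^6*c^2*s + (-1/2)*a^7*c + (1/2)*a^7*c*s + (-1/4)*a^8 + (1/4)*a^8*s) * hpyth
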